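/- Let P, Q, R be finite connected posets. Then the set A = { (I, σ₁, σ₂) : I ◎ P, σ₁ an order isomorphism from I to Q, σ₂ an order isomorphism from P \ I to R } is in bijection with the set B = { (v, σ) : v ∈ min(R), σ an order isomorphism from P to Q ↘_v R }. In particular, Σ_{I ◎ P} ⟨I, Q⟩·⟨P \ I, R⟩ = Σ_{v ∈ min(R)} ⟨P, Q ↘_v R⟩. -/
import Mathlib


open scoped Classical

/-- A finite poset on a subset (`carrier`) of an ambient type `α`. -/
structure FinPoset (α : Type*) where
  carrier : Finset α
  le : α → α → Prop
  mem_of_le : ∀ ⦃x y⦄, le x y → x ∈ carrier ∧ y ∈ carrier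
  le_refl : ∀ x ∈ carrier, le x x
  le_trans : ∀ ⦃x y z⦄, le x y → le y z → le x z
  le_antisymm : ∀ ⦃x y⦄, le x y → le y x → x = y

namespace FinPoset

variable {α : Type*} [DecidableEq α]

/-- The strict order `x <_P y`. -/
def lt (P : FinPoset α) (x y : α) : Prop := P.le x y ∧ x ≠ y

/-- `min(P)`: the set of minimal elements of `P`. -/
noncomputable def minSet (P : FinPoset α) : Finset α :=
  P.carrier.filter (fun x => ∀ y, P.le y x → y = x)

/-- Connectivity of a subset `S`, for the graph with edges between comparable pairs. -/
def ConnOn (P : FinPoset α) (S : Set α) : Prop :=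
  ∀ x ∈ S, ∀ y ∈ S,
    Relation.ReflTransGen (fun a b => a ∈ S ∧ b ∈ S ∧ (P.le a b ∨ P.le b a)) x y

/-- A finite poset is connected if it is nonempty and any two elements are linked by a
chain of comparable pairs. -/
def Connected (P : FinPoset α) : Prop :=
  P.carrier.Nonempty ∧ P.ConnOn ↑P.carrier

/-- `I` is a connected component of `S` (for the comparability graph of `P`). -/
def IsCC (P : FinPoset α) (S I : Set α) : Prop :=
  I.Nonempty ∧ I ⊆ S ∧ P.ConnOn I ∧
    ∀ x ∈ I, ∀ y ∈ S, (P.le x y ∨ P.le y x) → y ∈ I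

/-- `I_- = {x ∈ P \ I : ∃ y ∈ I, x ≤_P y}`. -/
noncomputable def below (P : FinPoset α) (I : Finset α) : Finset α :=
  (P.carrier \ I).filter (fun x => ∃ y ∈ I, P.le x y)

/-- `I ◎ P` : `I_-` is a singleton `{w}` with `w ∈ min(P)`, and `I` is a connected
component of `{x ∈ P : w <_P x}`. -/
def Circ (P : FinPoset α) (I : Finset α) : Prop :=
  ∃ w, P.below I = {w} ∧ w ∈ P.minSet ∧
    P.IsCC {x | x ∈ P.carrier ∧ P.lt w x} ↑I

/-- The induced poset on a subset `S`. -/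
def restrict (P : FinPoset α) (S : Finset α) : FinPoset α where
  carrier := P.carrier ∩ S
  le x y := P.le x y ∧ x ∈ S ∧ y ∈ S
  mem_of_le := by
    intro x y h
    rcases P.mem_of_le h.1 with ⟨hx, hy⟩
    exact ⟨Finset.mem_inter.2 ⟨hx, h.2.1⟩, Finset.mem_inter.2 ⟨hy, h.2.2⟩⟩
  le_refl := by
    intro x hx
    rcases Finset.mem_inter.1 hx with ⟨h1, h2⟩
    exact ⟨P.le_refl x h1, h2, h2⟩
  le_trans := by
    rintro x y z ⟨h1, hx, hy⟩ ⟨h2, _, hz⟩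
    exact ⟨P.le_trans h1 h2, hx, hz⟩
  le_antisymm := by
    rintro x y ⟨h1, _, _⟩ ⟨h2, _, _⟩
    exact P.le_antisymm h1 h2

/-- The grafting `P ↘_v Q` of `P` above the vertex `v` of `Q` (auxiliary version, with
the disjointness hypotheses as arguments). -/
def graftAux (P Q : FinPoset α) (v : α) (hd : Disjoint P.carrier Q.carrier)
    (hv : v ∈ Q.carrier) : FinPoset α where
  carrier := P.carrier ∪ Q.carrier
  le x y := P.le x y ∨ Q.le x y ∨ (Q.le x v ∧ y ∈ P.carrier)
  mem_of_le := by
    rintro x y (h | h | ⟨h1, h2⟩)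
    · rcases P.mem_of_le h with ⟨hx, hy⟩
      exact ⟨Finset.mem_union_left _ hx, Finset.mem_union_left _ hy⟩
    · rcases Q.mem_of_le h with ⟨hx, hy⟩
      exact ⟨Finset.mem_union_right _ hx, Finset.mem_union_right _ hy⟩
    · exact ⟨Finset.mem_union_right _ (Q.mem_of_le h1).1, Finset.mem_union_left _ h2⟩
  le_refl := by
    intro x hx
    rcases Finset.mem_union.1 hx with h | h
    · exact Or.inl (P.le_refl x h)
    · exact Or.inr (Or.inl (Q.le_refl x h))
  le_trans := by
    rintro x y z (h1 | h1 | ⟨h1, h1'⟩) (h2 | h2 | ⟨h2, h2'⟩)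
    · exact Or.inl (P.le_trans h1 h2)
    · exact absurd (Q.mem_of_le h2).1 (Finset.disjoint_left.1 hd (P.mem_of_le h1).2)
    · exact absurd (Q.mem_of_le h2).1 (Finset.disjoint_left.1 hd (P.mem_of_le h1).2)
    · exact absurd (P.mem_of_le h2).1 (Finset.disjoint_right.1 hd (Q.mem_of_le h1).2)
    · exact Or.inr (Or.inl (Q.le_trans h1 h2))
    · exact Or.inr (Or.inr ⟨Q.le_trans h1 h2, h2'⟩)
    · exact Or.inr (Or.inr ⟨h1, (P.mem_of_le h2).2⟩)
    · exact absurd (Q.mem_of_le h2).1 (Finset.disjoint_left.1 hd h1')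
    · exact absurd (Q.mem_of_le h2).1 (Finset.disjoint_left.1 hd h1')
  le_antisymm := by
    rintro x y (h1 | h1 | ⟨h1, h1'⟩) (h2 | h2 | ⟨h2, h2'⟩)
    · exact P.le_antisymm h1 h2
    · exact absurd (Q.mem_of_le h2).1 (Finset.disjoint_left.1 hd (P.mem_of_le h1).2)
    · exact absurd (Q.mem_of_le h2).1 (Finset.disjoint_left.1 hd (P.mem_of_le h1).2)
    · exact absurd (P.mem_of_le h2).1 (Finset.disjoint_right.1 hd (Q.mem_of_le h1).2)
    · exact Q.le_antisymm h1 h2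
    · exact absurd (Q.mem_of_le h1).1 (Finset.disjoint_left.1 hd h2')
    · exact absurd (P.mem_of_le h2).2 (Finset.disjoint_right.1 hd (Q.mem_of_le h1).1)
    · exact absurd (Q.mem_of_le h2).1 (Finset.disjoint_left.1 hd h1')
    · exact absurd (Q.mem_of_le h1).1 (Finset.disjoint_left.1 hd h2')
  
/-- The grafting `P ↘_v Q` of `P` above the vertex `v` of `Q`: the poset on
`X₁ ⊔ X₂` restricting to `P` on `X₁` and to `Q` on `X₂`, with `q ≤ p` for `q ∈ X₂`,
`p ∈ X₁` iff `q ≤_Q v`.  (Junk value when the carriers are not disjoint or `v ∉ Q`.) -/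
noncomputable def graft (P Q : FinPoset α) (v : α) : FinPoset α :=
  if h : Disjoint P.carrier Q.carrier ∧ v ∈ Q.carrier then P.graftAux Q v h.1 h.2 else P

/-- The set of subsets `I` of the carrier with `I ◎ P`. -/
noncomputable def circSet (P : FinPoset α) : Finset (Finset α) :=
  P.carrier.powerset.filter (fun I => P.Circ I)

/-- Order isomorphisms from `A` to `B`, encoded as maps `α → α` that are the identity
outside of the carrier of `A`. -/
def Isos (A B : FinPoset α) : Set (α → α) :=
  {f | Set.BijOn f ↑A.carrier ↑B.carrier ∧
    (∀ x ∈ A.carrier, ∀ y ∈ A.carrier, (A.le x y ↔ B.le (f x) (f y))) ∧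
    ∀ x, x ∉ A.carrier → f x = x}

/-- `⟨A, B⟩`: the number of order isomorphisms from `A` to `B`. -/
noncomputable def pairing (A B : FinPoset α) : ℕ := Nat.card ↥(Isos A B)

/-- The NAP coproduct `δ(P) = (1/|min(P)|) Σ_{I ◎ P} I ⊗ (P \ I)`, with values in the
rational vector space spanned by pairs of finite posets. -/
noncomputable def delta (P : FinPoset α) : (FinPoset α × FinPoset α) →₀ ℚ :=
  ((P.minSet.card : ℚ))⁻¹ • ∑ I ∈ P.circSet,
    Finsupp.single (P.restrict I, P.restrict (P.carrier \ I)) (1 : ℚ)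

end FinPoset

/-- The set `A` of triples `(I, σ₁, σ₂)` with `I ◎ P`, `σ₁ : I ≅ Q` and
`σ₂ : P \ I ≅ R`. -/
def TripleSet {α : Type*} [DecidableEq α] (P Q R : FinPoset α) :
    Set (Finset α × (α → α) × (α → α)) :=
  {p | P.Circ p.1 ∧ p.2.1 ∈ FinPoset.Isos (P.restrict p.1) Q ∧
    p.2.2 ∈ FinPoset.Isos (P.restrict (P.carrier \ p.1)) R}

/-- The set `B` of pairs `(v, σ)` with `v ∈ min(R)` and `σ : P ≅ Q ↘_v R`. -/
def GraftIsoSet {α : Type*} [DecidableEq α] (P Q R : FinPoset α) :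
    Set (α × (α → α)) :=
  {q | q.1 ∈ R.minSet ∧ q.2 ∈ FinPoset.Isos P (FinPoset.graft Q R q.1)}


section Aux

open FinPoset

variable {α : Type*} [DecidableEq α]

/-- Transfer of reflexive-transitive chains along a bijection. -/
private lemma rtg_transfer {f : α → α} {s t : Set α} (hinj : Set.InjOn f s)
    (hsurj : Set.SurjOn f s t)
    {r r' : α → α → Prop}
    (hmem : ∀ a b, r' a b → a ∈ t ∧ b ∈ t)
    (hstep : ∀ a ∈ s, ∀ b ∈ s, r' (f a) (f b) → r a b)
    {x y : α} (hx : x ∈ s) (hy : y ∈ s)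
    (h : Relation.ReflTransGen r' (f x) (f y)) : Relation.ReflTransGen r x y := by
  suffices H : ∀ c, Relation.ReflTransGen r' (f x) c →
      ∀ y ∈ s, c = f y → Relation.ReflTransGen r x y from H _ h y hy rfl
  intro c hc
  induction hc with
  | refl =>
    intro y hy he
    have : x = y := hinj hx hy he
    subst this; exact Relation.ReflTransGen.refl
  | tail hab hr ih =>
    intro y hy he
    obtain ⟨hb, _⟩ := hmem _ _ hr
    obtain ⟨a, ha, hfa⟩ := hsurj hb
    refine (ih a ha hfa.symm).tail (hstep a ha y hy ?_)
    rw [hfa, ← he]; exact hr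

private lemma circ_subset {P : FinPoset α} {I : Finset α} (h : P.Circ I) :
    I ⊆ P.carrier := by
  obtain ⟨w, hb, hm, hcc⟩ := h
  intro x hx
  exact (hcc.2.1 (Finset.mem_coe.2 hx)).1

private lemma isos_finite (A B : FinPoset α) : (Isos A B).Finite := by
  rw [← Set.finite_coe_iff]
  refine Finite.of_injective
    (fun f => (fun x : ↥A.carrier => (⟨f.1 x, f.2.1.1 x.2⟩ : ↥B.carrier))) ?_
  intro f g hfg
  ext x
  by_cases hx : x ∈ A.carrier
  · exact congrArg Subtype.val (congrFun hfg ⟨x, hx⟩)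
  · rw [f.2.2.2 x hx, g.2.2.2 x hx]

private lemma nat_card_sigma {ι : Type*} [Fintype ι] (f : ι → Type*)
    [∀ i, Finite (f i)] : Nat.card (Sigma f) = ∑ i, Nat.card (f i) := by
  letI : ∀ i, Fintype (f i) := fun i => Fintype.ofFinite _
  simp [Nat.card_eq_fintype_card, Fintype.card_sigma]

private lemma graft_carrier {Q R : FinPoset α} {v : α}
    (hd : Disjoint Q.carrier R.carrier) (hv : v ∈ R.carrier) :
    (FinPoset.graft Q R v).carrier = Q.carrier ∪ R.carrier := by
  rw [FinPoset.graft, dif_pos ⟨hd, hv⟩]; rfl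

private lemma graft_le {Q R : FinPoset α} {v : α}
    (hd : Disjoint Q.carrier R.carrier) (hv : v ∈ R.carrier) (x y : α) :
    (FinPoset.graft Q R v).le x y ↔
      (Q.le x y ∨ R.le x y ∨ (R.le x v ∧ y ∈ Q.carrier)) := by
  rw [FinPoset.graft, dif_pos ⟨hd, hv⟩]; rfl

/-- Forward well-definedness. -/
private lemma fwd_mem {P Q R : FinPoset α} (hQR : Disjoint Q.carrier R.carrier)
    {I : Finset α} {σ₁ σ₂ : α → α}
    (h1 : σ₁ ∈ Isos (P.restrict I) Q)
    (h2 : σ₂ ∈ Isos (P.restrict (P.carrier \ I)) R)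
    {w : α} (hw : P.below I = {w}) (hwm : w ∈ P.minSet)
    (hcc : P.IsCC {x | x ∈ P.carrier ∧ P.lt w x} ↑I) :
    (σ₂ w, fun x => if x ∈ I then σ₁ x else σ₂ x) ∈ GraftIsoSet P Q R := by
  obtain ⟨h1bij, h1iso, h1id⟩ := h1
  obtain ⟨h2bij, h2iso, h2id⟩ := h2
  have hIsub : (↑I : Set α) ⊆ {x | x ∈ P.carrier ∧ P.lt w x} := hcc.2.1
  have hIP : ∀ x ∈ I, x ∈ P.carrier := fun x hx => (hIsub (Finset.mem_coe.2 hx)).1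
  have hwP : w ∈ P.carrier := (Finset.mem_filter.1 hwm).1
  have hwmin : ∀ y, P.le y w → y = w := (Finset.mem_filter.1 hwm).2
  have hwb : w ∈ P.below I := hw ▸ Finset.mem_singleton_self w
  have hwsd : w ∈ P.carrier \ I := (Finset.mem_filter.1 hwb).1
  have hwI : w ∉ I := (Finset.mem_sdiff.1 hwsd).2
  -- membership in restricted carriers
  have memr1 : ∀ x ∈ I, x ∈ (P.restrict I).carrier := fun x hx =>
    Finset.mem_inter.2 ⟨hIP x hx, hx⟩
  have memr2 : ∀ x ∈ P.carrier \ I, x ∈ (P.restrict (P.carrier \ I)).carrier :=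
    fun x hx => Finset.mem_inter.2 ⟨(Finset.mem_sdiff.1 hx).1, hx⟩
  have σ₁Q : ∀ x ∈ I, σ₁ x ∈ Q.carrier := fun x hx =>
    Finset.mem_coe.1 (h1bij.1 (Finset.mem_coe.2 (memr1 x hx)))
  have σ₂R : ∀ x ∈ P.carrier \ I, σ₂ x ∈ R.carrier := fun x hx =>
    Finset.mem_coe.1 (h2bij.1 (Finset.mem_coe.2 (memr2 x hx)))
  have hvR : σ₂ w ∈ R.carrier := σ₂R w hwsd
  set v := σ₂ w with hv
  -- key order facts
  have w_lt : ∀ y ∈ I, P.le w y ∧ w ≠ y := fun y hy => (hIsub (Finset.mem_coe.2 hy)).2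
  have not_cross : ∀ x ∈ I, ∀ y, y ∈ P.carrier → y ∉ I → ¬ P.le x y := by
    intro x hx y hyP hyI h
    have hwx := (hIsub (Finset.mem_coe.2 hx)).2
    have hwy : P.le w y := P.le_trans hwx.1 h
    have hne : w ≠ y := by
      intro e
      rw [← e] at h
      exact hwx.2 (P.le_antisymm hwx.1 h)
    exact hyI (Finset.mem_coe.1
      (hcc.2.2.2 x (Finset.mem_coe.2 hx) y ⟨hyP, hwy, hne⟩ (Or.inl h)))
  have le_into : ∀ x, x ∈ P.carrier → x ∉ I → ∀ y ∈ I, (P.le x y ↔ P.le x w) := by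
    intro x hxP hxI y hy
    constructor
    · intro h
      have hxb : x ∈ P.below I := by
        refine Finset.mem_filter.2 ⟨Finset.mem_sdiff.2 ⟨hxP, hxI⟩, ⟨y, hy, h⟩⟩
      rw [hw, Finset.mem_singleton] at hxb
      rw [hxb]; exact P.le_refl w hwP
    · intro h
      have hxw : x = w := hwmin x h
      rw [hxw]; exact (w_lt y hy).1
  -- the glued map
  set σ : α → α := fun x => if x ∈ I then σ₁ x else σ₂ x with hσ
  have σ_eqI : ∀ x ∈ I, σ x = σ₁ x := fun x hx => if_pos hx
  have σ_eqO : ∀ x, x ∉ I → σ x = σ₂ x := fun x hx => if_neg hx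
  have σQ : ∀ x ∈ I, σ x ∈ Q.carrier := fun x hx => (σ_eqI x hx) ▸ σ₁Q x hx
  have σR : ∀ x ∈ P.carrier \ I, σ x ∈ R.carrier := fun x hx =>
    (σ_eqO x (Finset.mem_sdiff.1 hx).2) ▸ σ₂R x hx
  have hvmin : v ∈ R.minSet := by
    refine Finset.mem_filter.2 ⟨hvR, ?_⟩
    intro z hz
    have hzR : z ∈ R.carrier := (R.mem_of_le hz).1
    obtain ⟨y, hy, hfy⟩ := h2bij.2.2 (Finset.mem_coe.2 hzR)
    have hy' : y ∈ (P.restrict (P.carrier \ I)).carrier := Finset.mem_coe.1 hy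
    have hyw : (P.restrict (P.carrier \ I)).le y w := by
      rw [h2iso y hy' w (memr2 w hwsd), hfy]; exact hz
    have : y = w := hwmin y hyw.1
    rw [← hfy, this]
  show v ∈ R.minSet ∧ σ ∈ Isos P (FinPoset.graft Q R v)
  constructor
  · exact hvmin
  refine ⟨?_, ?_, ?_⟩
  · -- BijOn
    rw [graft_carrier hQR hvR]
    constructor
    · intro x hx
      rw [Finset.coe_union]
      by_cases hxI : x ∈ I
      · exact Or.inl (σQ x hxI)
      · exact Or.inr (σR x (Finset.mem_sdiff.2 ⟨Finset.mem_coe.1 hx, hxI⟩))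
    constructor
    · intro x hx y hy hxy
      by_cases hxI : x ∈ I <;> by_cases hyI : y ∈ I
      · have := h1bij.2.1 (Finset.mem_coe.2 (memr1 x hxI))
          (Finset.mem_coe.2 (memr1 y hyI))
        rw [σ_eqI x hxI, σ_eqI y hyI] at hxy
        exact this hxy
      · exfalso
        have h1' := σQ x hxI
        have h2' := σR y (Finset.mem_sdiff.2 ⟨Finset.mem_coe.1 hy, hyI⟩)
        rw [hxy] at h1'
        exact Finset.disjoint_left.1 hQR h1' h2'
      · exfalso
        have h1' := σQ y hyI
        have h2' := σR x (Finset.mem_sdiff.2 ⟨Finset.mem_coe.1 hx, hxI⟩)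
        rw [← hxy] at h1'
        exact Finset.disjoint_left.1 hQR h1' h2'
      · have := h2bij.2.1
          (Finset.mem_coe.2 (memr2 x (Finset.mem_sdiff.2 ⟨Finset.mem_coe.1 hx, hxI⟩)))
          (Finset.mem_coe.2 (memr2 y (Finset.mem_sdiff.2 ⟨Finset.mem_coe.1 hy, hyI⟩)))
        rw [σ_eqO x hxI, σ_eqO y hyI] at hxy
        exact this hxy
    · intro z hz
      rw [Finset.coe_union] at hz
      rcases hz with hz | hz
      · obtain ⟨x, hx, hfx⟩ := h1bij.2.2 hz
        have hx' : x ∈ (P.restrict I).carrier := Finset.mem_coe.1 hx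
        have hxI : x ∈ I := (Finset.mem_inter.1 hx').2
        refine ⟨x, Finset.mem_coe.2 (hIP x hxI), ?_⟩
        rw [σ_eqI x hxI, hfx]
      · obtain ⟨x, hx, hfx⟩ := h2bij.2.2 hz
        have hx' : x ∈ (P.restrict (P.carrier \ I)).carrier := Finset.mem_coe.1 hx
        have hxsd : x ∈ P.carrier \ I := (Finset.mem_inter.1 hx').2
        refine ⟨x, Finset.mem_coe.2 (Finset.mem_sdiff.1 hxsd).1, ?_⟩
        rw [σ_eqO x (Finset.mem_sdiff.1 hxsd).2, hfx]
  · -- order iso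
    intro x hx y hy
    rw [graft_le hQR hvR]
    by_cases hxI : x ∈ I <;> by_cases hyI : y ∈ I
    · -- both in I
      have h1'' := σQ x hxI
      have h2'' := σQ y hyI
      constructor
      · intro h
        refine Or.inl ?_
        rw [σ_eqI x hxI, σ_eqI y hyI]
        exact (h1iso x (memr1 x hxI) y (memr1 y hyI)).1 ⟨h, hxI, hyI⟩
      · rintro (h | h | ⟨h, _⟩)
        · rw [σ_eqI x hxI, σ_eqI y hyI] at h
          exact ((h1iso x (memr1 x hxI) y (memr1 y hyI)).2 h).1
        · exact absurd (R.mem_of_le h).1 (fun hc => Finset.disjoint_left.1 hQR h1'' hc)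
        · exact absurd (R.mem_of_le h).1 (fun hc => Finset.disjoint_left.1 hQR h1'' hc)
    · -- x ∈ I, y ∉ I : both sides false
      have hysd : y ∈ P.carrier \ I := Finset.mem_sdiff.2 ⟨hy, hyI⟩
      have h1'' := σQ x hxI
      have h2'' := σR y hysd
      constructor
      · intro h; exact absurd h (not_cross x hxI y hy hyI)
      · rintro (h | h | ⟨_, h⟩)
        · exact absurd (Q.mem_of_le h).2 (fun hc => Finset.disjoint_left.1 hQR hc h2'')
        · exact absurd (R.mem_of_le h).1 (fun hc => Finset.disjoint_left.1 hQR h1'' hc)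
        · exact absurd h (fun hc => Finset.disjoint_left.1 hQR hc h2'')
    · -- x ∉ I, y ∈ I
      have hxsd : x ∈ P.carrier \ I := Finset.mem_sdiff.2 ⟨hx, hxI⟩
      have h1'' := σR x hxsd
      have h2'' := σQ y hyI
      have key : P.le x y ↔ R.le (σ x) v := by
        rw [le_into x hx hxI y hyI, σ_eqO x hxI, hv]
        constructor
        · intro h
          exact ((h2iso x (memr2 x hxsd) w (memr2 w hwsd)).1 ⟨h, hxsd, hwsd⟩)
        · intro h
          exact ((h2iso x (memr2 x hxsd) w (memr2 w hwsd)).2 h).1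
      constructor
      · intro h
        exact Or.inr (Or.inr ⟨key.1 h, h2''⟩)
      · rintro (h | h | ⟨h, _⟩)
        · exact absurd (Q.mem_of_le h).1 (fun hc => Finset.disjoint_left.1 hQR hc h1'')
        · exact absurd (R.mem_of_le h).2 (fun hc => Finset.disjoint_left.1 hQR h2'' hc)
        · exact key.2 h
    · -- both out of I
      have hxsd : x ∈ P.carrier \ I := Finset.mem_sdiff.2 ⟨hx, hxI⟩
      have hysd : y ∈ P.carrier \ I := Finset.mem_sdiff.2 ⟨hy, hyI⟩
      have h1'' := σR x hxsd
      have h2'' := σR y hysd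
      constructor
      · intro h
        refine Or.inr (Or.inl ?_)
        rw [σ_eqO x hxI, σ_eqO y hyI]
        exact (h2iso x (memr2 x hxsd) y (memr2 y hysd)).1 ⟨h, hxsd, hysd⟩
      · rintro (h | h | ⟨_, h⟩)
        · exact absurd (Q.mem_of_le h).1 (fun hc => Finset.disjoint_left.1 hQR hc h1'')
        · rw [σ_eqO x hxI, σ_eqO y hyI] at h
          exact ((h2iso x (memr2 x hxsd) y (memr2 y hysd)).2 h).1
        · exact absurd h (fun hc => Finset.disjoint_left.1 hQR hc h2'')
  · -- identity outside
    intro x hx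
    have hxI : x ∉ I := fun hc => hx (hIP x hc)
    rw [σ_eqO x hxI]
    exact h2id x (fun hc => hx (Finset.mem_inter.1 hc).1)


/-- Backward well-definedness. -/
private lemma bwd_mem {P Q R : FinPoset α} (hQ : Q.Connected)
    (hQR : Disjoint Q.carrier R.carrier)
    {v : α} {σ : α → α} (hv : v ∈ R.minSet) (hσ : σ ∈ Isos P (FinPoset.graft Q R v))
    {I : Finset α} (hI : I = P.carrier.filter (fun x => σ x ∈ Q.carrier)) :
    P.Circ I ∧ (fun x => if x ∈ I then σ x else x) ∈ Isos (P.restrict I) Q ∧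
      (fun x => if x ∈ P.carrier \ I then σ x else x)
        ∈ Isos (P.restrict (P.carrier \ I)) R := by
  obtain ⟨hbij, hiso, hid⟩ := hσ
  have hvR : v ∈ R.carrier := (Finset.mem_filter.1 hv).1
  have hvmin : ∀ z, R.le z v → z = v := (Finset.mem_filter.1 hv).2
  have hvQ : v ∉ Q.carrier := fun hc => Finset.disjoint_left.1 hQR hc hvR
  have Gle : ∀ x y, (FinPoset.graft Q R v).le x y ↔
      (Q.le x y ∨ R.le x y ∨ (R.le x v ∧ y ∈ Q.carrier)) := graft_le hQR hvR
  have Gc := graft_carrier hQR hvR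
  have memI : ∀ x, x ∈ I ↔ x ∈ P.carrier ∧ σ x ∈ Q.carrier := by
    intro x; rw [hI, Finset.mem_filter]
  have hIP : ∀ x ∈ I, x ∈ P.carrier := fun x hx => ((memI x).1 hx).1
  have σQ : ∀ x ∈ I, σ x ∈ Q.carrier := fun x hx => ((memI x).1 hx).2
  have σQR : ∀ x ∈ P.carrier, σ x ∈ Q.carrier ∪ R.carrier := by
    intro x hx
    have := hbij.1 (Finset.mem_coe.2 hx)
    rw [Gc] at this
    exact Finset.mem_coe.1 this
  have σR : ∀ x ∈ P.carrier, x ∉ I → σ x ∈ R.carrier := by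
    intro x hx hxI
    rcases Finset.mem_union.1 (σQR x hx) with h | h
    · exact absurd ((memI x).2 ⟨hx, h⟩) hxI
    · exact h
  -- the preimage of v
  have hvmem : (v : α) ∈ (↑(Q.graft R v).carrier : Set α) := by
    rw [Gc, Finset.coe_union]; exact Or.inr (Finset.mem_coe.2 hvR)
  obtain ⟨w, hwP', hσw⟩ := hbij.2.2 hvmem
  have hwP : w ∈ P.carrier := Finset.mem_coe.1 hwP'
  have hwI : w ∉ I := fun hc => hvQ (hσw ▸ σQ w hc)
  -- order characterizations
  have QQ : ∀ x ∈ P.carrier, ∀ y ∈ P.carrier, σ x ∈ Q.carrier → σ y ∈ Q.carrier →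
      (P.le x y ↔ Q.le (σ x) (σ y)) := by
    intro x hx y hy hxQ hyQ
    rw [hiso x hx y hy, Gle]
    constructor
    · rintro (h | h | ⟨h, _⟩)
      · exact h
      · exact absurd (R.mem_of_le h).1 (fun hc => Finset.disjoint_left.1 hQR hxQ hc)
      · exact absurd (R.mem_of_le h).1 (fun hc => Finset.disjoint_left.1 hQR hxQ hc)
    · exact Or.inl
  have RR : ∀ x ∈ P.carrier, ∀ y ∈ P.carrier, σ x ∈ R.carrier → σ y ∈ R.carrier →
      (P.le x y ↔ R.le (σ x) (σ y)) := by
    intro x hx y hy hxR hyR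
    rw [hiso x hx y hy, Gle]
    constructor
    · rintro (h | h | ⟨_, h⟩)
      · exact absurd (Q.mem_of_le h).1 (fun hc => Finset.disjoint_left.1 hQR hc hxR)
      · exact h
      · exact absurd h (fun hc => Finset.disjoint_left.1 hQR hc hyR)
    · exact fun h => Or.inr (Or.inl h)
  have cross : ∀ x ∈ P.carrier, ∀ y ∈ P.carrier, σ x ∈ R.carrier → σ y ∈ Q.carrier →
      (P.le x y ↔ R.le (σ x) v) := by
    intro x hx y hy hxR hyQ
    rw [hiso x hx y hy, Gle]
    constructor
    · rintro (h | h | ⟨h, _⟩)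
      · exact absurd (Q.mem_of_le h).1 (fun hc => Finset.disjoint_left.1 hQR hc hxR)
      · exact absurd (R.mem_of_le h).2 (fun hc => Finset.disjoint_left.1 hQR hyQ hc)
      · exact h
    · exact fun h => Or.inr (Or.inr ⟨h, hyQ⟩)
  have noQR : ∀ x ∈ P.carrier, ∀ y ∈ P.carrier, σ x ∈ Q.carrier → σ y ∈ R.carrier →
      ¬ P.le x y := by
    intro x hx y hy hxQ hyR h
    rw [hiso x hx y hy, Gle] at h
    rcases h with h | h | ⟨_, h⟩
    · exact Finset.disjoint_left.1 hQR (Q.mem_of_le h).2 hyR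
    · exact Finset.disjoint_left.1 hQR hxQ (R.mem_of_le h).1
    · exact Finset.disjoint_left.1 hQR h hyR
  have hwle : ∀ y ∈ I, P.le w y ∧ w ≠ y := by
    intro y hy
    have hyP := hIP y hy
    have hyQ := σQ y hy
    constructor
    · rw [cross w hwP y hyP (hσw ▸ hvR) hyQ, hσw]
      exact R.le_refl v hvR
    · intro e; rw [e] at hσw; exact hvQ (hσw ▸ hyQ)
  -- w is minimal in P
  have hwmin : ∀ y, P.le y w → y = w := by
    intro y h
    have hyP : y ∈ P.carrier := (P.mem_of_le h).1
    rcases Finset.mem_union.1 (σQR y hyP) with hyQ | hyR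
    · exact absurd h (noQR y hyP w hwP hyQ (hσw ▸ hvR))
    · have : R.le (σ y) v := by
        have := (RR y hyP w hwP hyR (hσw ▸ hvR)).1 h
        rwa [hσw] at this
      have hsy : σ y = σ w := by rw [hσw]; exact hvmin _ this
      exact hbij.2.1 (Finset.mem_coe.2 hyP) hwP' hsy
  -- I is nonempty
  obtain ⟨q0, hq0⟩ := hQ.1
  have hq0mem : (q0 : α) ∈ (↑(Q.graft R v).carrier : Set α) := by
    rw [Gc, Finset.coe_union]; exact Or.inl (Finset.mem_coe.2 hq0)
  obtain ⟨y0, hy0P', hy0⟩ := hbij.2.2 hq0mem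
  have hy0I : y0 ∈ I := (memI y0).2 ⟨Finset.mem_coe.1 hy0P', hy0 ▸ hq0⟩
  -- below I = {w}
  have hbelow : P.below I = {w} := by
    ext x
    rw [FinPoset.below, Finset.mem_filter, Finset.mem_singleton]
    constructor
    · rintro ⟨hxsd, z, hz, hxz⟩
      obtain ⟨hxP, hxI⟩ := Finset.mem_sdiff.1 hxsd
      have hxR := σR x hxP hxI
      have : R.le (σ x) v := (cross x hxP z (hIP z hz) hxR (σQ z hz)).1 hxz
      have hsx : σ x = σ w := by rw [hσw]; exact hvmin _ this
      exact hbij.2.1 (Finset.mem_coe.2 hxP) hwP' hsx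
    · intro e
      subst e
      exact ⟨Finset.mem_sdiff.2 ⟨hwP, hwI⟩, y0, hy0I, (hwle y0 hy0I).1⟩
  -- I is a connected component
  have hbijI : Set.BijOn σ ↑I ↑Q.carrier := by
    refine ⟨fun x hx => Finset.mem_coe.2 (σQ x (Finset.mem_coe.1 hx)), ?_, ?_⟩
    · exact fun x hx y hy h => hbij.2.1 (Finset.mem_coe.2 (hIP x (Finset.mem_coe.1 hx)))
        (Finset.mem_coe.2 (hIP y (Finset.mem_coe.1 hy))) h
    · intro z hz
      obtain ⟨x, hx, hfx⟩ := hbij.2.2 (by rw [Gc, Finset.coe_union]; exact Or.inl hz)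
      exact ⟨x, Finset.mem_coe.2 ((memI x).2 ⟨Finset.mem_coe.1 hx,
        hfx ▸ Finset.mem_coe.1 hz⟩), hfx⟩
  have hcc : P.IsCC {x | x ∈ P.carrier ∧ P.lt w x} ↑I := by
    refine ⟨⟨y0, Finset.mem_coe.2 hy0I⟩, ?_, ?_, ?_⟩
    · intro x hx
      have hx' := Finset.mem_coe.1 hx
      exact ⟨hIP x hx', (hwle x hx').1, (hwle x hx').2⟩
    · intro x hx y hy
      have hx' := Finset.mem_coe.1 hx
      have hy' := Finset.mem_coe.1 hy
      refine rtg_transfer hbijI.2.1 hbijI.2.2 (r := fun a b => a ∈ (↑I : Set α) ∧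
        b ∈ (↑I : Set α) ∧ (P.le a b ∨ P.le b a)) ?_ ?_ hx hy
        (hQ.2 (σ x) (hbijI.1 hx) (σ y) (hbijI.1 hy))
      · exact fun a b hab => ⟨hab.1, hab.2.1⟩
      · intro a ha b hb hab
        have ha' := Finset.mem_coe.1 ha
        have hb' := Finset.mem_coe.1 hb
        refine ⟨ha, hb, ?_⟩
        rcases hab.2.2 with h | h
        · exact Or.inl ((QQ a (hIP a ha') b (hIP b hb') (σQ a ha') (σQ b hb')).2 h)
        · exact Or.inr ((QQ b (hIP b hb') a (hIP a ha') (σQ b hb') (σQ a ha')).2 h)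
    · intro x hx y hy hcomp
      have hx' := Finset.mem_coe.1 hx
      have hxP := hIP x hx'
      obtain ⟨hyP, hwy, hwyne⟩ := hy
      by_contra hyI
      have hyI' : y ∉ I := fun hc => hyI (Finset.mem_coe.2 hc)
      have hyR := σR y hyP hyI'
      rcases hcomp with h | h
      · exact noQR x hxP y hyP (σQ x hx') hyR h
      · have h1 : R.le (σ y) v := (cross y hyP x hxP hyR (σQ x hx')).1 h
        have h2 : σ y = σ w := by rw [hσw]; exact hvmin _ h1
        exact hwyne (hbij.2.1 (Finset.mem_coe.2 hwP) (Finset.mem_coe.2 hyP) h2.symm)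
  have hwminSet : w ∈ P.minSet := Finset.mem_filter.2 ⟨hwP, hwmin⟩
  refine ⟨⟨w, hbelow, hwminSet, hcc⟩, ?_, ?_⟩
  · -- σ₁
    have hc1 : ∀ x, x ∈ (P.restrict I).carrier ↔ x ∈ I := by
      intro x
      show x ∈ P.carrier ∩ I ↔ x ∈ I
      rw [Finset.mem_inter]
      exact ⟨And.right, fun h => ⟨hIP x h, h⟩⟩
    have heq : Set.EqOn σ (fun x => if x ∈ I then σ x else x) ↑I := by
      intro x hx
      simp only [if_pos (Finset.mem_coe.1 hx)]
    refine ⟨?_, ?_, ?_⟩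
    · have : (↑(P.restrict I).carrier : Set α) = ↑I := by
        ext x
        simp only [Finset.mem_coe, hc1]
      rw [this]
      exact hbijI.congr heq
    · intro x hx y hy
      have hx' := (hc1 x).1 hx
      have hy' := (hc1 y).1 hy
      have : (P.restrict I).le x y ↔ P.le x y := by
        show (P.le x y ∧ x ∈ I ∧ y ∈ I) ↔ P.le x y
        exact ⟨And.left, fun h => ⟨h, hx', hy'⟩⟩
      simp only [this, if_pos hx', if_pos hy']
      exact QQ x (hIP x hx') y (hIP y hy') (σQ x hx') (σQ y hy')
    · intro x hx
      have : x ∉ I := fun hc => hx ((hc1 x).2 hc)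
      simp only [if_neg this]
  · -- σ₂
    have hc2 : ∀ x, x ∈ (P.restrict (P.carrier \ I)).carrier ↔ x ∈ P.carrier \ I := by
      intro x
      show x ∈ P.carrier ∩ (P.carrier \ I) ↔ x ∈ P.carrier \ I
      rw [Finset.mem_inter]
      exact ⟨And.right, fun h => ⟨(Finset.mem_sdiff.1 h).1, h⟩⟩
    have hbij2 : Set.BijOn σ ↑(P.carrier \ I) ↑R.carrier := by
      refine ⟨?_, ?_, ?_⟩
      · intro x hx
        obtain ⟨hxP, hxI⟩ := Finset.mem_sdiff.1 (Finset.mem_coe.1 hx)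
        exact Finset.mem_coe.2 (σR x hxP hxI)
      · intro x hx y hy h
        obtain ⟨hxP, _⟩ := Finset.mem_sdiff.1 (Finset.mem_coe.1 hx)
        obtain ⟨hyP, _⟩ := Finset.mem_sdiff.1 (Finset.mem_coe.1 hy)
        exact hbij.2.1 (Finset.mem_coe.2 hxP) (Finset.mem_coe.2 hyP) h
      · intro z hz
        obtain ⟨x, hx, hfx⟩ := hbij.2.2 (by rw [Gc, Finset.coe_union]; exact Or.inr hz)
        have hxP := Finset.mem_coe.1 hx
        have hxI : x ∉ I := fun hc => Finset.disjoint_left.1 hQR (σQ x hc)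
          (hfx ▸ Finset.mem_coe.1 hz)
        exact ⟨x, Finset.mem_coe.2 (Finset.mem_sdiff.2 ⟨hxP, hxI⟩), hfx⟩
    have heq2 : Set.EqOn σ (fun x => if x ∈ P.carrier \ I then σ x else x)
        ↑(P.carrier \ I) := by
      intro x hx
      simp only [if_pos (Finset.mem_coe.1 hx)]
    refine ⟨?_, ?_, ?_⟩
    · have : (↑(P.restrict (P.carrier \ I)).carrier : Set α) = ↑(P.carrier \ I) := by
        ext x
        simp only [Finset.mem_coe, hc2]
      rw [this]
      exact hbij2.congr heq2
    · intro x hx y hy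
      have hx' := (hc2 x).1 hx
      have hy' := (hc2 y).1 hy
      obtain ⟨hxP, hxI⟩ := Finset.mem_sdiff.1 hx'
      obtain ⟨hyP, hyI⟩ := Finset.mem_sdiff.1 hy'
      have : (P.restrict (P.carrier \ I)).le x y ↔ P.le x y := by
        show (P.le x y ∧ x ∈ P.carrier \ I ∧ y ∈ P.carrier \ I) ↔ P.le x y
        exact ⟨And.left, fun h => ⟨h, hx', hy'⟩⟩
      simp only [this, if_pos hx', if_pos hy']
      exact RR x hxP y hyP (σR x hxP hxI) (σR y hyP hyI)
    · intro x hx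
      have : x ∉ P.carrier \ I := fun hc => hx ((hc2 x).2 hc)
      simp only [if_neg this]


private noncomputable def circW {P : FinPoset α} {I : Finset α} (h : P.Circ I) : α :=
  Exists.choose h

private lemma circW_spec {P : FinPoset α} {I : Finset α} (h : P.Circ I) :
    P.below I = {circW h} ∧ circW h ∈ P.minSet ∧
      P.IsCC {x | x ∈ P.carrier ∧ P.lt (circW h) x} ↑I := Exists.choose_spec h

private noncomputable def Φ (P Q R : FinPoset α) (hQR : Disjoint Q.carrier R.carrier)
    (p : ↥(TripleSet P Q R)) : ↥(GraftIsoSet P Q R) :=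
  ⟨(p.1.2.2 (circW p.2.1), fun x => if x ∈ p.1.1 then p.1.2.1 x else p.1.2.2 x),
    fwd_mem hQR p.2.2.1 p.2.2.2 (circW_spec p.2.1).1 (circW_spec p.2.1).2.1
      (circW_spec p.2.1).2.2⟩

private noncomputable def Ψ (P Q R : FinPoset α) (hQ : Q.Connected)
    (hQR : Disjoint Q.carrier R.carrier)
    (q : ↥(GraftIsoSet P Q R)) : ↥(TripleSet P Q R) :=
  ⟨(P.carrier.filter (fun x => q.1.2 x ∈ Q.carrier),
    fun x => if x ∈ P.carrier.filter (fun x => q.1.2 x ∈ Q.carrier) then q.1.2 x else x,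
    fun x => if x ∈ P.carrier \ P.carrier.filter (fun x => q.1.2 x ∈ Q.carrier)
      then q.1.2 x else x),
    bwd_mem hQ hQR q.2.1 q.2.2 rfl⟩

private lemma PsiPhi (P Q R : FinPoset α) (hQ : Q.Connected)
    (hQR : Disjoint Q.carrier R.carrier) (p : ↥(TripleSet P Q R)) :
    Ψ P Q R hQ hQR (Φ P Q R hQR p) = p := by
  obtain ⟨⟨I, σ₁, σ₂⟩, hp⟩ := p
  obtain ⟨hC, h1, h2⟩ := hp
  have hIP : I ⊆ P.carrier := circ_subset hC
  have σ₁Q : ∀ x ∈ I, σ₁ x ∈ Q.carrier := fun x hx =>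
    Finset.mem_coe.1 (h1.1.1 (Finset.mem_coe.2 (Finset.mem_inter.2 ⟨hIP hx, hx⟩)))
  have σ₂R : ∀ x ∈ P.carrier \ I, σ₂ x ∈ R.carrier := fun x hx =>
    Finset.mem_coe.1 (h2.1.1 (Finset.mem_coe.2
      (Finset.mem_inter.2 ⟨(Finset.mem_sdiff.1 hx).1, hx⟩)))
  have e1 : P.carrier.filter (fun x => (if x ∈ I then σ₁ x else σ₂ x) ∈ Q.carrier) = I := by
    ext x
    rw [Finset.mem_filter]
    constructor
    · rintro ⟨hxP, hxQ⟩
      by_contra hxI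
      rw [if_neg hxI] at hxQ
      exact Finset.disjoint_left.1 hQR hxQ (σ₂R x (Finset.mem_sdiff.2 ⟨hxP, hxI⟩))
    · intro hx
      refine ⟨hIP hx, ?_⟩
      rw [if_pos hx]
      exact σ₁Q x hx
  have e2 : (fun x => if x ∈ I then (if x ∈ I then σ₁ x else σ₂ x) else x) = σ₁ := by
    funext x
    by_cases hx : x ∈ I
    · rw [if_pos hx, if_pos hx]
    · rw [if_neg hx]
      exact (h1.2.2 x (fun hc => hx (Finset.mem_inter.1 hc).2)).symm
  have e3 : (fun x => if x ∈ P.carrier \ I then (if x ∈ I then σ₁ x else σ₂ x) else x)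
      = σ₂ := by
    funext x
    by_cases hx : x ∈ P.carrier \ I
    · rw [if_pos hx, if_neg (Finset.mem_sdiff.1 hx).2]
    · rw [if_neg hx]
      exact (h2.2.2 x (fun hc => hx (Finset.mem_inter.1 hc).2)).symm
  apply Subtype.ext
  show (P.carrier.filter (fun x => (if x ∈ I then σ₁ x else σ₂ x) ∈ Q.carrier),
    fun x => if x ∈ P.carrier.filter (fun x => (if x ∈ I then σ₁ x else σ₂ x) ∈ Q.carrier)
      then (if x ∈ I then σ₁ x else σ₂ x) else x,
    fun x => if x ∈ P.carrier \
        P.carrier.filter (fun x => (if x ∈ I then σ₁ x else σ₂ x) ∈ Q.carrier)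
      then (if x ∈ I then σ₁ x else σ₂ x) else x) = (I, σ₁, σ₂)
  rw [e1, e2, e3]

private lemma PhiPsi (P Q R : FinPoset α) (hQ : Q.Connected)
    (hQR : Disjoint Q.carrier R.carrier) (q : ↥(GraftIsoSet P Q R)) :
    Φ P Q R hQR (Ψ P Q R hQ hQR q) = q := by
  obtain ⟨⟨v, σ⟩, hq⟩ := q
  obtain ⟨hv, hσ⟩ := hq
  obtain ⟨hbij, hiso, hid⟩ := hσ
  have hvR : v ∈ R.carrier := (Finset.mem_filter.1 hv).1
  have hvmin : ∀ z, R.le z v → z = v := (Finset.mem_filter.1 hv).2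
  have Gle : ∀ x y, (FinPoset.graft Q R v).le x y ↔
      (Q.le x y ∨ R.le x y ∨ (R.le x v ∧ y ∈ Q.carrier)) := graft_le hQR hvR
  have Gc := graft_carrier hQR hvR
  set I : Finset α := P.carrier.filter (fun x => σ x ∈ Q.carrier) with hIdef
  have memI : ∀ x, x ∈ I ↔ x ∈ P.carrier ∧ σ x ∈ Q.carrier := by
    intro x; rw [hIdef, Finset.mem_filter]
  have σR : ∀ x ∈ P.carrier, x ∉ I → σ x ∈ R.carrier := by
    intro x hx hxI
    have := hbij.1 (Finset.mem_coe.2 hx)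
    rw [Gc] at this
    rcases Finset.mem_union.1 (Finset.mem_coe.1 this) with h | h
    · exact absurd ((memI x).2 ⟨hx, h⟩) hxI
    · exact h
  apply Subtype.ext
  set hC : P.Circ I := (bwd_mem hQ hQR hv ⟨hbij, hiso, hid⟩ hIdef).1 with hCdef
  set w0 : α := circW hC with hw0
  have hspec := circW_spec hC
  have hw0b : w0 ∈ P.below I := hspec.1 ▸ Finset.mem_singleton_self w0
  obtain ⟨hw0sd, y, hy, hw0y⟩ := Finset.mem_filter.1 hw0b
  obtain ⟨hw0P, hw0I⟩ := Finset.mem_sdiff.1 hw0sd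
  have hσw0R : σ w0 ∈ R.carrier := σR w0 hw0P hw0I
  have hσyQ : σ y ∈ Q.carrier := ((memI y).1 hy).2
  have hyP : y ∈ P.carrier := ((memI y).1 hy).1
  have hkey : σ w0 = v := by
    have := (hiso w0 hw0P y hyP).1 hw0y
    rw [Gle] at this
    rcases this with h | h | ⟨h, _⟩
    · exact absurd (Q.mem_of_le h).1 (fun hc => Finset.disjoint_left.1 hQR hc hσw0R)
    · exact absurd (R.mem_of_le h).2 (fun hc => Finset.disjoint_left.1 hQR hσyQ hc)
    · exact hvmin _ h
  have comp1 : (if w0 ∈ P.carrier \ I then σ w0 else w0) = v := by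
    rw [if_pos hw0sd]; exact hkey
  have comp2 : (fun x => if x ∈ I then (if x ∈ I then σ x else x)
      else (if x ∈ P.carrier \ I then σ x else x)) = σ := by
    funext x
    by_cases hx : x ∈ I
    · rw [if_pos hx, if_pos hx]
    · rw [if_neg hx]
      by_cases hxP : x ∈ P.carrier
      · rw [if_pos (Finset.mem_sdiff.2 ⟨hxP, hx⟩)]
      · rw [if_neg (fun hc => hxP (Finset.mem_sdiff.1 hc).1)]
        exact (hid x hxP).symm
  show ((if w0 ∈ P.carrier \ I then σ w0 else w0),
    fun x => if x ∈ I then (if x ∈ I then σ x else x)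
      else (if x ∈ P.carrier \ I then σ x else x)) = (v, σ)
  rw [comp1, comp2]

private lemma card_triple (P Q R : FinPoset α) :
    Nat.card ↥(TripleSet P Q R) = ∑ I ∈ P.circSet,
      FinPoset.pairing (P.restrict I) Q
        * FinPoset.pairing (P.restrict (P.carrier \ I)) R := by
  have e : ↥(TripleSet P Q R) ≃
      Σ I : ↥P.circSet,
        ↥(Isos (P.restrict I.1) Q) × ↥(Isos (P.restrict (P.carrier \ I.1)) R) :=
    { toFun := fun p => ⟨⟨p.1.1, Finset.mem_filter.2
        ⟨Finset.mem_powerset.2 (circ_subset p.2.1), p.2.1⟩⟩,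
        ⟨p.1.2.1, p.2.2.1⟩, ⟨p.1.2.2, p.2.2.2⟩⟩
      invFun := fun x => ⟨(x.1.1, x.2.1.1, x.2.2.1),
        ⟨(Finset.mem_filter.1 x.1.2).2, x.2.1.2, x.2.2.2⟩⟩
      left_inv := fun p => rfl
      right_inv := fun x => rfl }
  letI : ∀ i : ↥P.circSet, Finite
      (↥(Isos (P.restrict i.1) Q) × ↥(Isos (P.restrict (P.carrier \ i.1)) R)) := by
    intro i
    haveI := Set.finite_coe_iff.2 (isos_finite (P.restrict i.1) Q)
    haveI := Set.finite_coe_iff.2 (isos_finite (P.restrict (P.carrier \ i.1)) R)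
    infer_instance
  rw [Nat.card_congr e, nat_card_sigma]
  calc (∑ i : ↥P.circSet, Nat.card
        (↥(Isos (P.restrict i.1) Q) × ↥(Isos (P.restrict (P.carrier \ i.1)) R)))
      = ∑ i : ↥P.circSet, FinPoset.pairing (P.restrict i.1) Q
          * FinPoset.pairing (P.restrict (P.carrier \ i.1)) R :=
        Finset.sum_congr rfl (fun i _ => Nat.card_prod _ _)
    _ = _ := Finset.sum_coe_sort P.circSet (fun I => FinPoset.pairing (P.restrict I) Q
        * FinPoset.pairing (P.restrict (P.carrier \ I)) R)

private lemma card_graft (P Q R : FinPoset α) :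
    Nat.card ↥(GraftIsoSet P Q R)
      = ∑ v ∈ R.minSet, FinPoset.pairing P (FinPoset.graft Q R v) := by
  have e : ↥(GraftIsoSet P Q R) ≃ Σ v : ↥R.minSet, ↥(Isos P (FinPoset.graft Q R v.1)) :=
    { toFun := fun q => ⟨⟨q.1.1, q.2.1⟩, ⟨q.1.2, q.2.2⟩⟩
      invFun := fun x => ⟨(x.1.1, x.2.1), ⟨x.1.2, x.2.2⟩⟩
      left_inv := fun q => rfl
      right_inv := fun x => rfl }
  letI : ∀ v : ↥R.minSet, Finite ↥(Isos P (FinPoset.graft Q R v.1)) :=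
    fun v => Set.finite_coe_iff.2 (isos_finite _ _)
  rw [Nat.card_congr e, nat_card_sigma]
  exact Finset.sum_coe_sort R.minSet (fun v => FinPoset.pairing P (FinPoset.graft Q R v))

end Aux



/-- The set `A = {(I, σ₁, σ₂) : I ◎ P, σ₁ : I ≅ Q, σ₂ : P\I ≅ R}` is
in bijection with `B = {(v, σ) : v ∈ min(R), σ : P ≅ Q ↘_v R}`; in particular
`Σ_{I ◎ P} ⟨I, Q⟩⟨P \ I, R⟩ = Σ_{v ∈ min(R)} ⟨P, Q ↘_v R⟩`. -/
theorem tripleSet_equiv_graftIsoSet {α : Type*} [DecidableEq α] (P Q R : FinPoset α)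
    (hP : P.Connected) (hQ : Q.Connected) (hR : R.Connected)
    (hQR : Disjoint Q.carrier R.carrier) :
    Nonempty (↥(TripleSet P Q R) ≃ ↥(GraftIsoSet P Q R))
      ∧ (∑ I ∈ P.circSet,
          FinPoset.pairing (P.restrict I) Q
            * FinPoset.pairing (P.restrict (P.carrier \ I)) R)
        = ∑ v ∈ R.minSet, FinPoset.pairing P (FinPoset.graft Q R v) := by
  have key : Nonempty (↥(TripleSet P Q R) ≃ ↥(GraftIsoSet P Q R)) :=
    ⟨{ toFun := Φ P Q R hQR
       invFun := Ψ P Q R hQ hQR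
       left_inv := PsiPhi P Q R hQ hQR
       right_inv := PhiPsi P Q R hQ hQR }⟩
  refine ⟨key, ?_⟩
  rw [← card_triple, ← card_graft]
  exact Nat.card_congr key.some
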